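/- arXiv:2208.07326 — 2 statements merged into one kernel-verified Lean document; each statement's English description precedes it below -/
import Mathlib

section
/- Let r > 0, σ > 0, fix θ∞ > 0, and let ψ be the cutoff described in the context. For each u∞ < −(r + 2σ) there is a unique ρ∞(u∞) > 0 such that ∫_{ℝ³} M∞(ξ) ψ(ξ) dξ = 1, where M∞ is the Maxwellian with parameters (ρ∞(u∞), u∞, θ∞); with this choice, define μ∞(u∞) := ( ∫_{{ξ ∈ ℝ³ : ξ₁ < 0}} |∂_{ξ₁}(M∞ψ − M∞)(ξ)|² / M∞(ξ) dξ )^{1/2}. Then ρ∞(u∞) → 1 and μ∞(u∞) → 0 as u∞ → −∞. -/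
open MeasureTheory Real Set Filter

/-- The Maxwellian `M∞` with parameters `ρ∞, θ∞, u∞`, where `ξ = (ξ₁, ξ₂, ξ₃)`. -/
noncomputable def Maxwellian (ρ θ u : ℝ) (ξ : ℝ × ℝ × ℝ) : ℝ :=
  ρ * (2 * π * θ) ^ (-(3:ℝ)/2) *
    Real.exp (-(((ξ.1 - u)^2 + ξ.2.1^2 + ξ.2.2^2) / (2 * θ)))

/-- The constant `μ∞ = ‖∂_{ξ₁}(M∞ψ − M∞) M∞^{-1/2} χ(ξ₁<0)‖_{L²_ξ}` appearing in the
stability condition. -/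
noncomputable def muInf (ρ θ u : ℝ) (ψ : ℝ → ℝ) : ℝ :=
  Real.sqrt (∫ ξ in {ξ : ℝ × ℝ × ℝ | ξ.1 < 0},
    (deriv (fun s => Maxwellian ρ θ u (s, ξ.2) * ψ s - Maxwellian ρ θ u (s, ξ.2)) ξ.1)^2
      / Maxwellian ρ θ u ξ)

noncomputable def gauss1 (θ t : ℝ) : ℝ := (2*π*θ)^(-(1:ℝ)/2) * Real.exp (-(t^2/(2*θ)))

section Aux

variable {θ a u : ℝ} {ψ : ℝ → ℝ}

lemma two_pi_theta_pos (hθ : 0 < θ) : 0 < 2*π*θ := by positivity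

lemma gauss1_pos (hθ : 0 < θ) (t : ℝ) : 0 < gauss1 θ t := by
  unfold gauss1; positivity

lemma maxwellian_eq (hθ : 0 < θ) (ρ u : ℝ) (ξ : ℝ × ℝ × ℝ) :
    Maxwellian ρ θ u ξ = (ρ * gauss1 θ (ξ.1-u)) * (gauss1 θ ξ.2.1 * gauss1 θ ξ.2.2) := by
  have hP := two_pi_theta_pos hθ
  have h3 : (2*π*θ) ^ (-(3:ℝ)/2) = ((2*π*θ) ^ (-(1:ℝ)/2))^(3:ℕ) := by
    rw [← Real.rpow_natCast ((2*π*θ) ^ (-(1:ℝ)/2)) 3, ← Real.rpow_mul hP.le]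
    norm_num
  have he : Real.exp (-(((ξ.1 - u)^2 + ξ.2.1^2 + ξ.2.2^2) / (2 * θ)))
      = Real.exp (-((ξ.1-u)^2/(2*θ))) * (Real.exp (-(ξ.2.1^2/(2*θ))) * Real.exp (-(ξ.2.2^2/(2*θ)))) := by
    rw [← Real.exp_add, ← Real.exp_add]; ring_nf
  unfold Maxwellian gauss1
  rw [h3, he]; ring

lemma integrable_gauss1 (hθ : 0 < θ) (u : ℝ) : Integrable (fun t => gauss1 θ (t - u)) := by
  have hb : (0:ℝ) < 1/(2*θ) := by positivity
  have : Integrable (fun t : ℝ => gauss1 θ t) := by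
    have := (integrable_exp_neg_mul_sq hb).const_mul ((2*π*θ)^(-(1:ℝ)/2))
    refine this.congr (Eventually.of_forall fun t => ?_)
    unfold gauss1; ring_nf
  exact this.comp_sub_right u

lemma integral_gauss1 (hθ : 0 < θ) (u : ℝ) : ∫ t, gauss1 θ (t - u) = 1 := by
  have hP := two_pi_theta_pos hθ
  have hb : (0:ℝ) < 1/(2*θ) := by positivity
  rw [integral_sub_right_eq_self (fun t => gauss1 θ t) u]
  unfold gauss1
  rw [integral_const_mul]
  have : ∫ t : ℝ, Real.exp (-(t^2/(2*θ))) = ∫ t : ℝ, Real.exp (-(1/(2*θ)) * t^2) := by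
    congr 1; funext t; ring_nf
  rw [this, integral_gaussian]
  have : π / (1/(2*θ)) = 2*π*θ := by field_simp
  rw [this, show -(1:ℝ)/2 = -(1/2) by ring, Real.rpow_neg hP.le, Real.sqrt_eq_rpow,
    inv_mul_cancel₀]
  positivity

lemma integrable_gauss1_mul (hθ : 0 < θ) (u : ℝ) {φ : ℝ → ℝ}
    (hφ : Continuous φ) (hb : ∃ C, ∀ s, |φ s| ≤ C) :
    Integrable (fun s => gauss1 θ (s-u) * φ s) := by
  have := (integrable_gauss1 hθ u).bdd_mul hφ.aestronglyMeasurable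
    (c := hb.choose) (Eventually.of_forall fun s => by simpa using hb.choose_spec s)
  exact this.congr (Eventually.of_forall fun s => mul_comm _ _)

lemma gauss1_tail_ptwise (hθ : 0 < θ) {a u s : ℝ} (hu : u ≤ a) (hs : a ≤ s) :
    gauss1 θ (s - u) ≤ Real.exp (-((a-u)^2/(2*θ))) * gauss1 θ (s - a) := by
  unfold gauss1
  rw [show Real.exp (-((a-u)^2/(2*θ))) * ((2*π*θ)^(-(1:ℝ)/2) * Real.exp (-((s-a)^2/(2*θ))))
      = (2*π*θ)^(-(1:ℝ)/2) * Real.exp (-((a-u)^2/(2*θ)) + -((s-a)^2/(2*θ))) by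
    rw [Real.exp_add]; ring]
  gcongr
  have key : (a-u)^2 + (s-a)^2 ≤ (s-u)^2 := by nlinarith
  have h2θ : (0:ℝ) < 2*θ := by linarith
  calc -((s-u)^2/(2*θ)) ≤ -(((a-u)^2+(s-a)^2)/(2*θ)) := by
        apply neg_le_neg; gcongr
      _ = -((a-u)^2/(2*θ)) + -((s-a)^2/(2*θ)) := by ring

lemma gauss1_tail (hθ : 0 < θ) {a u : ℝ} (hu : u ≤ a) :
    ∫ s in Set.Ioi a, gauss1 θ (s - u) ≤ Real.exp (-((a-u)^2/(2*θ))) := by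
  have h1 : ∫ s in Set.Ioi a, gauss1 θ (s - u)
      ≤ ∫ s in Set.Ioi a, Real.exp (-((a-u)^2/(2*θ))) * gauss1 θ (s - a) := by
    apply setIntegral_mono_on (integrable_gauss1 hθ u).integrableOn
      (((integrable_gauss1 hθ a).const_mul _).integrableOn) measurableSet_Ioi
    exact fun s hs => gauss1_tail_ptwise hθ hu (le_of_lt hs)
  refine h1.trans ?_
  rw [integral_const_mul]
  have h2 : ∫ s in Set.Ioi a, gauss1 θ (s - a) ≤ ∫ s, gauss1 θ (s - a) :=
    setIntegral_le_integral (integrable_gauss1 hθ a)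
      (Eventually.of_forall fun s => (gauss1_pos hθ _).le)
  rw [integral_gauss1 hθ a] at h2
  calc Real.exp (-((a-u)^2/(2*θ))) * ∫ s in Set.Ioi a, gauss1 θ (s - a)
      ≤ Real.exp (-((a-u)^2/(2*θ))) * 1 := by gcongr <;> positivity
    _ = _ := mul_one _

lemma J_le_one (hθ : 0 < θ) (hψ : Continuous ψ) (hψ0 : ∀ s, 0 ≤ ψ s) (hψ1 : ∀ s, ψ s ≤ 1)
    (u : ℝ) : ∫ s, gauss1 θ (s-u) * ψ s ≤ 1 := by
  have h := integral_mono (integrable_gauss1_mul hθ u hψ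
      ⟨1, fun s => by rw [abs_of_nonneg (hψ0 s)]; exact hψ1 s⟩)
    (integrable_gauss1 hθ u) (fun s => by
      have := gauss1_pos hθ (s-u)
      calc gauss1 θ (s-u) * ψ s ≤ gauss1 θ (s-u) * 1 := by gcongr; exact hψ1 s
        _ = gauss1 θ (s-u) := mul_one _)
  rwa [integral_gauss1 hθ u] at h

lemma J_ge (hθ : 0 < θ) (hψ : Continuous ψ) (hψ0 : ∀ s, 0 ≤ ψ s) (hψ1 : ∀ s, ψ s ≤ 1)
    (hψb : ∀ s, s ≤ a → ψ s = 1) (hu : u ≤ a) :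
    1 - Real.exp (-((a-u)^2/(2*θ))) ≤ ∫ s, gauss1 θ (s-u) * ψ s := by
  have hint : Integrable (fun s => gauss1 θ (s-u) * ψ s) := integrable_gauss1_mul hθ u hψ
      ⟨1, fun s => by rw [abs_of_nonneg (hψ0 s)]; exact hψ1 s⟩
  have h1 : ∫ s in Set.Iic a, gauss1 θ (s-u) * ψ s ≤ ∫ s, gauss1 θ (s-u) * ψ s :=
    setIntegral_le_integral hint (Eventually.of_forall fun s =>
      mul_nonneg (gauss1_pos hθ _).le (hψ0 s))
  have h2 : ∫ s in Set.Iic a, gauss1 θ (s-u) * ψ s = ∫ s in Set.Iic a, gauss1 θ (s-u) := by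
    apply setIntegral_congr_fun measurableSet_Iic
    intro s hs
    simp only [hψb s hs, mul_one]
  have h3 : (∫ s in Set.Iic a, gauss1 θ (s-u)) + ∫ s in Set.Ioi a, gauss1 θ (s-u)
      = ∫ s, gauss1 θ (s-u) :=
    intervalIntegral.integral_Iic_add_Ioi (integrable_gauss1 hθ u).integrableOn (integrable_gauss1 hθ u).integrableOn
  rw [integral_gauss1 hθ u] at h3
  have h4 := gauss1_tail hθ hu
  linarith

lemma J_pos (hθ : 0 < θ) (hψ : Continuous ψ) (hψ0 : ∀ s, 0 ≤ ψ s) (hψ1 : ∀ s, ψ s ≤ 1)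
    (hψb : ∀ s, s ≤ a → ψ s = 1) (u : ℝ) :
    0 < ∫ s, gauss1 θ (s-u) * ψ s := by
  have hint : Integrable (fun s => gauss1 θ (s-u) * ψ s) := integrable_gauss1_mul hθ u hψ
      ⟨1, fun s => by rw [abs_of_nonneg (hψ0 s)]; exact hψ1 s⟩
  have h1 : ∫ s in Set.Iic a, gauss1 θ (s-u) * ψ s ≤ ∫ s, gauss1 θ (s-u) * ψ s :=
    setIntegral_le_integral hint (Eventually.of_forall fun s =>
      mul_nonneg (gauss1_pos hθ _).le (hψ0 s))
  refine lt_of_lt_of_le ?_ h1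
  have h2 : ∫ s in Set.Iic a, gauss1 θ (s-u) * ψ s = ∫ s in Set.Iic a, gauss1 θ (s-u) := by
    apply setIntegral_congr_fun measurableSet_Iic
    intro s hs
    simp only [hψb s hs, mul_one]
  rw [h2]
  rw [setIntegral_pos_iff_support_of_nonneg_ae
    (Eventually.of_forall fun s => (gauss1_pos hθ _).le) (integrable_gauss1 hθ u).integrableOn]
  have hsupp : Function.support (fun s => gauss1 θ (s-u)) = Set.univ :=
    Set.eq_univ_of_forall fun s => (gauss1_pos hθ _).ne'
  rw [hsupp, Set.univ_inter]
  simp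

lemma integral_gauss1' (hθ : 0 < θ) : ∫ t, gauss1 θ t = 1 := by
  simpa using integral_gauss1 hθ 0

lemma integral_gauss2 (hθ : 0 < θ) : ∫ y : ℝ × ℝ, gauss1 θ y.1 * gauss1 θ y.2 = 1 := by
  rw [Measure.volume_eq_prod, integral_prod_mul, integral_gauss1' hθ, mul_one]

lemma maxwellian_pos (hθ : 0 < θ) {ρ : ℝ} (hρ : 0 < ρ) (u : ℝ) (ξ : ℝ × ℝ × ℝ) :
    0 < Maxwellian ρ θ u ξ := by
  unfold Maxwellian; positivity

lemma integral_maxwellian_mul (hθ : 0 < θ) (ρ u : ℝ) (φ : ℝ → ℝ) :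
    ∫ ξ : ℝ × ℝ × ℝ, Maxwellian ρ θ u ξ * φ ξ.1
      = ρ * ∫ s, gauss1 θ (s-u) * φ s := by
  have h : (fun ξ : ℝ × ℝ × ℝ => Maxwellian ρ θ u ξ * φ ξ.1)
      = fun ξ : ℝ × ℝ × ℝ => (fun s => ρ * (gauss1 θ (s-u) * φ s)) ξ.1
          * ((fun y : ℝ × ℝ => gauss1 θ y.1 * gauss1 θ y.2) ξ.2) := by
    funext ξ; rw [maxwellian_eq hθ]; ring
  have key := integral_prod_mul (μ := (volume : Measure ℝ)) (ν := (volume : Measure (ℝ × ℝ)))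
    (fun s => ρ * (gauss1 θ (s-u) * φ s)) (fun y : ℝ × ℝ => gauss1 θ y.1 * gauss1 θ y.2)
  rw [h, Measure.volume_eq_prod, key, integral_gauss2 hθ, mul_one, integral_const_mul]

lemma region_eq : {ξ : ℝ × ℝ × ℝ | ξ.1 < 0} = Set.Iio 0 ×ˢ (Set.univ : Set (ℝ × ℝ)) := by
  ext ξ; simp [Set.mem_prod]

lemma muInf_integrand_eq (hθ : 0 < θ) {ρ : ℝ} (hρ : 0 < ρ) (u : ℝ) {ψ : ℝ → ℝ}
    (hψd : Differentiable ℝ ψ) (ξ : ℝ × ℝ × ℝ) :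
    (deriv (fun s => Maxwellian ρ θ u (s, ξ.2) * ψ s - Maxwellian ρ θ u (s, ξ.2)) ξ.1)^2
      / Maxwellian ρ θ u ξ
    = (ρ * (gauss1 θ (ξ.1-u) * (deriv ψ ξ.1 - (ξ.1-u)/θ * (ψ ξ.1 - 1))^2))
      * (gauss1 θ ξ.2.1 * gauss1 θ ξ.2.2) := by
  have hθ' : (θ:ℝ) ≠ 0 := ne_of_gt hθ
  have hg : HasDerivAt (fun s : ℝ => -(((s - u)^2 + ξ.2.1^2 + ξ.2.2^2) / (2*θ)))
      (-((ξ.1-u)/θ)) ξ.1 := by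
    have h1 : HasDerivAt (fun s : ℝ => ((s - u)^2 + ξ.2.1^2 + ξ.2.2^2) / (2*θ))
        ((2*(ξ.1-u)^1*1)/(2*θ)) ξ.1 :=
      (((((hasDerivAt_id ξ.1).sub_const u).pow 2).add_const _).add_const _).div_const _
    have h2 := h1.neg
    exact h2.congr_deriv (by rw [pow_one, mul_one, mul_div_mul_left _ _ two_ne_zero])
  have hM : HasDerivAt (fun s => Maxwellian ρ θ u (s, ξ.2))
      (Maxwellian ρ θ u ξ * (-((ξ.1-u)/θ))) ξ.1 := by
    simp only [Maxwellian]
    exact (hg.exp.const_mul (ρ * (2*π*θ)^(-(3:ℝ)/2))).congr_deriv (by ring)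
  have hψ' : HasDerivAt ψ (deriv ψ ξ.1) ξ.1 := (hψd ξ.1).hasDerivAt
  have hder : HasDerivAt (fun s => Maxwellian ρ θ u (s, ξ.2) * ψ s - Maxwellian ρ θ u (s, ξ.2)) _ ξ.1 := (hM.mul hψ').sub hM
  rw [hder.deriv]
  have hM0 : Maxwellian ρ θ u ξ ≠ 0 := (maxwellian_pos hθ hρ u ξ).ne'
  rw [div_eq_iff hM0]
  rw [maxwellian_eq hθ]
  field_simp
  ring

lemma muInf_sq_eq (hθ : 0 < θ) {ρ : ℝ} (hρ : 0 < ρ) (u : ℝ) {ψ : ℝ → ℝ}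
    (hψd : Differentiable ℝ ψ) :
    (∫ ξ in {ξ : ℝ × ℝ × ℝ | ξ.1 < 0},
      (deriv (fun s => Maxwellian ρ θ u (s, ξ.2) * ψ s - Maxwellian ρ θ u (s, ξ.2)) ξ.1)^2
        / Maxwellian ρ θ u ξ)
    = ρ * ∫ s in Set.Iio 0, gauss1 θ (s-u) * (deriv ψ s - (s-u)/θ * (ψ s - 1))^2 := by
  have h : (fun ξ : ℝ × ℝ × ℝ =>
      (deriv (fun s => Maxwellian ρ θ u (s, ξ.2) * ψ s - Maxwellian ρ θ u (s, ξ.2)) ξ.1)^2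
        / Maxwellian ρ θ u ξ)
      = fun ξ : ℝ × ℝ × ℝ =>
        (fun s => ρ * (gauss1 θ (s-u) * (deriv ψ s - (s-u)/θ * (ψ s - 1))^2)) ξ.1
          * ((fun y : ℝ × ℝ => gauss1 θ y.1 * gauss1 θ y.2) ξ.2) :=
    funext fun ξ => muInf_integrand_eq hθ hρ u hψd ξ
  have key := setIntegral_prod_mul (μ := (volume : Measure ℝ)) (ν := (volume : Measure (ℝ × ℝ)))
    (fun s => ρ * (gauss1 θ (s-u) * (deriv ψ s - (s-u)/θ * (ψ s - 1))^2))
    (fun y : ℝ × ℝ => gauss1 θ y.1 * gauss1 θ y.2) (Set.Iio 0) Set.univ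
  rw [h, region_eq, Measure.volume_eq_prod, key, Measure.restrict_univ, integral_gauss2 hθ,
    mul_one, integral_const_mul]

lemma tendsto_sub_atBot_atTop (a : ℝ) : Tendsto (fun u : ℝ => a - u) atBot atTop := by
  simp only [sub_eq_add_neg]
  exact tendsto_atTop_add_const_left _ _ tendsto_neg_atBot_atTop

lemma tendstoE (hθ : 0 < θ) (a : ℝ) :
    Tendsto (fun u : ℝ => Real.exp (-((a-u)^2/(2*θ)))) atBot (nhds 0) := by
  have h1 := tendsto_sub_atBot_atTop a
  have h2 : Tendsto (fun u : ℝ => (a-u)^2) atBot atTop :=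
    (tendsto_pow_atTop two_ne_zero).comp h1
  have h3 : Tendsto (fun u : ℝ => -((a-u)^2/(2*θ))) atBot atBot :=
    tendsto_neg_atTop_atBot.comp (h2.atTop_div_const (by positivity))
  exact Real.tendsto_exp_atBot.comp h3

lemma tendsto_quad_gauss {b : ℝ} (hb : 0 < b) (p q : ℝ) :
    Tendsto (fun y : ℝ => (p + q*y)^2 * Real.exp (-(y^2/b))) atTop (nhds 0) := by
  have hg : Tendsto (fun z : ℝ => z * Real.exp (-z)) atTop (nhds 0) := by
    simpa using tendsto_pow_mul_exp_neg_atTop_nhds_zero 1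
  have hy : Tendsto (fun y : ℝ => y^2/b) atTop atTop :=
    (tendsto_pow_atTop two_ne_zero).atTop_div_const hb
  have h2 := (hg.comp hy).const_mul ((|p|+|q|)^2 * b)
  rw [mul_zero] at h2
  apply squeeze_zero' (Eventually.of_forall fun y => by positivity)
    ?_ h2
  filter_upwards [eventually_ge_atTop (1:ℝ)] with y hy1
  have hy0 : 0 ≤ y := by linarith
  simp only [Function.comp]
  have habs : |p + q*y| ≤ (|p|+|q|)*y := by
    calc |p + q*y| ≤ |p| + |q*y| := abs_add_le _ _
      _ = |p| + |q| * y := by rw [abs_mul, abs_of_nonneg hy0]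
      _ ≤ |p| * y + |q| * y := by nlinarith [abs_nonneg p]
      _ = (|p|+|q|) * y := by ring
  have hsq : (p + q*y)^2 ≤ ((|p|+|q|)*y)^2 := by
    rw [← sq_abs (p + q*y)]
    exact pow_le_pow_left₀ (abs_nonneg _) habs 2
  have hbne : b ≠ 0 := ne_of_gt hb
  calc (p + q*y)^2 * Real.exp (-(y^2/b)) ≤ ((|p|+|q|)*y)^2 * Real.exp (-(y^2/b)) := by
        gcongr
    _ = (|p|+|q|)^2 * b * (y^2/b * Real.exp (-(y^2/b))) := by field_simp

lemma deriv_eq_zero_of_lt {a : ℝ} (hψb : ∀ s, s ≤ a → ψ s = 1) {s : ℝ} (hs : s < a) :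
    deriv ψ s = 0 := by
  have h : ψ =ᶠ[nhds s] fun _ => (1:ℝ) :=
    eventually_of_mem (Iio_mem_nhds hs) (fun x hx => hψb x (le_of_lt hx))
  rw [h.deriv_eq]
  exact deriv_const s 1

lemma gauss1_le (hθ : 0 < θ) (t : ℝ) : gauss1 θ t ≤ (2*π*θ)^(-(1:ℝ)/2) := by
  unfold gauss1
  have h : Real.exp (-(t^2/(2*θ))) ≤ 1 := by
    rw [Real.exp_le_one_iff]
    have : 0 ≤ t^2/(2*θ) := by positivity
    linarith
  calc (2*π*θ)^(-(1:ℝ)/2) * Real.exp (-(t^2/(2*θ))) ≤ (2*π*θ)^(-(1:ℝ)/2) * 1 := by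
        gcongr
    _ = _ := mul_one _

lemma oneD_bound (hθ : 0 < θ) {a u K : ℝ} (hu : u ≤ a) (ha : a < 0) (hK0 : 0 ≤ K)
    (hψ0 : ∀ s, 0 ≤ ψ s) (hψ1 : ∀ s, ψ s ≤ 1) (hψb : ∀ s, s ≤ a → ψ s = 1)
    (hK : ∀ s ∈ Set.Icc a 0, |deriv ψ s| ≤ K) :
    ∫ s in Set.Iio 0, gauss1 θ (s-u) * (deriv ψ s - (s-u)/θ * (ψ s - 1))^2
      ≤ Real.exp (-((a-u)^2/(2*θ))) * ((2*π*θ)^(-(1:ℝ)/2) * ((K + (-u)/θ)^2 * (0 - a))) := by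
  set W : ℝ → ℝ := fun s => deriv ψ s - (s-u)/θ * (ψ s - 1) with hW
  have hstep : ∫ s in Set.Iio 0, gauss1 θ (s-u) * W s ^ 2
      = ∫ s in Set.Ico a 0, gauss1 θ (s-u) * W s ^ 2 := by
    apply setIntegral_eq_of_subset_of_forall_diff_eq_zero measurableSet_Iio
      (fun x hx => hx.2)
    intro x hx
    have hxa : x < a := by
      rcases hx with ⟨hx1, hx2⟩
      simp only [Set.mem_Ico, not_and, not_lt] at hx2
      by_contra hcon
      push_neg at hcon
      exact absurd (hx2 hcon) (not_le.mpr hx1)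
    have h1 : deriv ψ x = 0 := deriv_eq_zero_of_lt hψb hxa
    have h2 : ψ x = 1 := hψb x (le_of_lt hxa)
    simp [hW, h1, h2]
  rw [hstep]
  set C : ℝ := Real.exp (-((a-u)^2/(2*θ))) * ((2*π*θ)^(-(1:ℝ)/2) * (K + (-u)/θ)^2) with hC
  have hball : ∀ s ∈ Set.Ico a 0, ‖gauss1 θ (s-u) * W s ^ 2‖ ≤ C := by
    intro s hs
    rcases hs with ⟨hs1, hs2⟩
    have hGpos := gauss1_pos hθ (s-u)
    have hG : gauss1 θ (s-u) ≤ Real.exp (-((a-u)^2/(2*θ))) * (2*π*θ)^(-(1:ℝ)/2) := by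
      calc gauss1 θ (s-u) ≤ Real.exp (-((a-u)^2/(2*θ))) * gauss1 θ (s-a) :=
            gauss1_tail_ptwise hθ hu hs1
        _ ≤ Real.exp (-((a-u)^2/(2*θ))) * (2*π*θ)^(-(1:ℝ)/2) := by
            gcongr; exact gauss1_le hθ _
    have hWb : |W s| ≤ K + (-u)/θ := by
      have h1 : |deriv ψ s| ≤ K := hK s ⟨hs1, le_of_lt hs2⟩
      have h2 : |(s-u)/θ * (ψ s - 1)| ≤ (-u)/θ := by
        rw [abs_mul]
        have hsu : 0 ≤ s - u := by linarith
        have hd : |(s-u)/θ| = (s-u)/θ := abs_of_nonneg (by positivity)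
        have hψab : |ψ s - 1| ≤ 1 := by
          rw [abs_le]; constructor <;> [linarith [hψ0 s]; linarith [hψ1 s]]
        calc |(s-u)/θ| * |ψ s - 1| ≤ ((s-u)/θ) * 1 := by
              rw [hd]; gcongr
          _ = (s-u)/θ := mul_one _
          _ ≤ (0-u)/θ := by gcongr <;> linarith
          _ = (-u)/θ := by ring
      calc |W s| ≤ |deriv ψ s| + |(s-u)/θ * (ψ s - 1)| := abs_sub _ _
        _ ≤ K + (-u)/θ := add_le_add h1 h2
    have hW2 : W s ^ 2 ≤ (K + (-u)/θ)^2 := by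
      rw [← sq_abs (W s)]
      exact pow_le_pow_left₀ (abs_nonneg _) hWb 2
    rw [Real.norm_eq_abs, abs_of_nonneg (by positivity)]
    calc gauss1 θ (s-u) * W s ^ 2
        ≤ (Real.exp (-((a-u)^2/(2*θ))) * (2*π*θ)^(-(1:ℝ)/2)) * (K + (-u)/θ)^2 := by
          apply mul_le_mul hG hW2 (by positivity)
          positivity
      _ = C := by rw [hC]; ring
  have hvol : volume (Set.Ico a (0:ℝ)) < ⊤ := by
    rw [Real.volume_Ico]; exact ENNReal.ofReal_lt_top
  have := norm_setIntegral_le_of_norm_le_const hvol hball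
  rw [measureReal_def, Real.volume_Ico, ENNReal.toReal_ofReal (by linarith)] at this
  have hle : ∫ s in Set.Ico a 0, gauss1 θ (s-u) * W s ^ 2 ≤ C * (0 - a) :=
    le_trans (le_abs_self _) (by rwa [Real.norm_eq_abs] at this)
  calc ∫ s in Set.Ico a 0, gauss1 θ (s-u) * W s ^ 2 ≤ C * (0-a) := hle
    _ = _ := by rw [hC]; ring

end Aux

/-- for fixed `θ∞ > 0`, for each `u∞ < −(r+2σ)` there is a unique
`ρ∞(u∞) > 0` with `∫ M∞ψ = 1`; for this choice, `ρ∞(u∞) → 1` and `μ∞(u∞) → 0` as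
`u∞ → −∞`. -/
theorem quasineutral_normalization_large_velocity
    (r σ θ : ℝ) (hr : 0 < r) (hσ : 0 < σ) (hθ : 0 < θ)
    (ψ : ℝ → ℝ) (hψ : ContDiff ℝ (⊤ : ℕ∞) ψ) (hψ0 : ∀ s, 0 ≤ ψ s) (hψ1 : ∀ s, ψ s ≤ 1)
    (hψa : ∀ s, -r ≤ s → ψ s = 0) (hψb : ∀ s, s ≤ -r - σ → ψ s = 1) :
    (∀ u : ℝ, u < -(r + 2*σ) → ∃! ρ : ℝ, 0 < ρ ∧
      (∫ ξ : ℝ × ℝ × ℝ, Maxwellian ρ θ u ξ * ψ ξ.1) = 1) ∧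
    ∀ ρfun : ℝ → ℝ,
      (∀ u : ℝ, u < -(r + 2*σ) → 0 < ρfun u ∧
        (∫ ξ : ℝ × ℝ × ℝ, Maxwellian (ρfun u) θ u ξ * ψ ξ.1) = 1) →
      Tendsto ρfun atBot (nhds 1) ∧
      Tendsto (fun u => muInf (ρfun u) θ u ψ) atBot (nhds 0) := by
  have hψc : Continuous ψ := hψ.continuous
  have hψd : Differentiable ℝ ψ := hψ.differentiable (by simp)
  have hJpos : ∀ u : ℝ, 0 < ∫ s, gauss1 θ (s-u) * ψ s :=
    J_pos (a := -r - σ) hθ hψc hψ0 hψ1 hψb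
  constructor
  · -- existence and uniqueness
    intro u hu
    refine ⟨(∫ s, gauss1 θ (s-u) * ψ s)⁻¹, ⟨inv_pos.mpr (hJpos u), ?_⟩, ?_⟩
    · rw [integral_maxwellian_mul hθ]
      exact inv_mul_cancel₀ (hJpos u).ne'
    · rintro ρ' ⟨hρ'pos, hρ'⟩
      rw [integral_maxwellian_mul hθ] at hρ'
      have := eq_div_of_mul_eq (hJpos u).ne' hρ'
      rw [this, one_div]
  · intro ρfun hρfun
    have ha0 : -r - σ < 0 := by linarith
    -- J tendsto 1
    have hJ1 : Tendsto (fun u => ∫ s, gauss1 θ (s-u) * ψ s) atBot (nhds 1) := by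
      apply tendsto_of_tendsto_of_tendsto_of_le_of_le'
        (g := fun u => 1 - Real.exp (-((-r - σ - u)^2/(2*θ)))) (h := fun _ => (1:ℝ))
      · have := (tendstoE hθ (-r - σ)).const_sub 1
        simpa using this
      · exact tendsto_const_nhds
      · filter_upwards [eventually_le_atBot (-r - σ)] with u hu
        exact J_ge hθ hψc hψ0 hψ1 hψb hu
      · exact Eventually.of_forall fun u => J_le_one hθ hψc hψ0 hψ1 u
    have hρ_eqJ : ∀ᶠ u in atBot, (∫ s, gauss1 θ (s-u) * ψ s)⁻¹ = ρfun u := by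
      filter_upwards [eventually_lt_atBot (-(r + 2*σ))] with u hu
      have h2 := (hρfun u hu).2
      rw [integral_maxwellian_mul hθ] at h2
      rw [eq_div_of_mul_eq (hJpos u).ne' h2, one_div]
    have hρ_t : Tendsto ρfun atBot (nhds 1) := by
      have hinv := hJ1.inv₀ one_ne_zero
      rw [inv_one] at hinv
      exact hinv.congr' hρ_eqJ
    refine ⟨hρ_t, ?_⟩
    -- bound on deriv ψ on the compact set
    obtain ⟨s₀, hs₀mem, hs₀max⟩ := isCompact_Icc.exists_isMaxOn
      (⟨-r - σ, by constructor <;> linarith⟩ : (Set.Icc (-r - σ) (0:ℝ)).Nonempty)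
      (((hψ.continuous_deriv (by simp)).abs).continuousOn :
        ContinuousOn (fun s => |deriv ψ s|) (Set.Icc (-r - σ) 0))
    rw [isMaxOn_iff] at hs₀max
    set K := |deriv ψ s₀| with hKdef
    have hK0 : 0 ≤ K := abs_nonneg _
    -- the upper bound B
    set B : ℝ → ℝ := fun u => 2 * (Real.exp (-((-r - σ - u)^2/(2*θ))) *
      ((2*π*θ)^(-(1:ℝ)/2) * ((K + (-u)/θ)^2 * (0 - (-r - σ))))) with hBdef
    have hB : Tendsto B atBot (nhds 0) := by
      have hg := tendsto_quad_gauss (b := 2*θ) (by positivity) (K + (-(-r - σ))/θ) (1/θ)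
      have h2 := (hg.comp (tendsto_sub_atBot_atTop (-r - σ))).const_mul
        (2 * ((2*π*θ)^(-(1:ℝ)/2) * (0 - (-r - σ))))
      rw [mul_zero] at h2
      refine h2.congr fun u => ?_
      simp only [Function.comp, hBdef]
      have hKu : K + (-(-r - σ))/θ + (1/θ)*(-r - σ - u) = K + (-u)/θ := by
        field_simp
        ring
      rw [hKu]
      ring
    have hρ2 : ∀ᶠ u in atBot, ρfun u ≤ 2 := hρ_t.eventually (eventually_le_nhds one_lt_two)
    apply squeeze_zero' (Eventually.of_forall fun u => Real.sqrt_nonneg _)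
      ?_ (by simpa using hB.sqrt)
    filter_upwards [eventually_lt_atBot (-(r + 2*σ)), eventually_le_atBot (-r - σ), hρ2]
      with u hu1 hu2 hu3
    have hρpos := (hρfun u hu1).1
    rw [muInf_sq_eq hθ hρpos u hψd]
    apply Real.sqrt_le_sqrt
    have hT := oneD_bound hθ (a := -r - σ) hu2 ha0 hK0 hψ0 hψ1 hψb hs₀max
    have hE2 : 0 ≤ Real.exp (-((-r - σ - u)^2/(2*θ))) *
        ((2*π*θ)^(-(1:ℝ)/2) * ((K + (-u)/θ)^2 * (0 - (-r - σ)))) := by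
      have h00 : (0:ℝ) - (-r - σ) = r + σ := by ring
      rw [h00]; positivity
    calc ρfun u * ∫ s in Set.Iio 0, gauss1 θ (s-u) * (deriv ψ s - (s-u)/θ * (ψ s - 1))^2
        ≤ ρfun u * (Real.exp (-((-r - σ - u)^2/(2*θ))) *
            ((2*π*θ)^(-(1:ℝ)/2) * ((K + (-u)/θ)^2 * (0 - (-r - σ))))) := by
          exact mul_le_mul_of_nonneg_left hT (le_of_lt hρpos)
      _ ≤ 2 * (Real.exp (-((-r - σ - u)^2/(2*θ))) *
            ((2*π*θ)^(-(1:ℝ)/2) * ((K + (-u)/θ)^2 * (0 - (-r - σ))))) := by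
          exact mul_le_mul_of_nonneg_right hu3 hE2
      _ = B u := rfl
end

section
/- Let β ∈ (0,1), 0 < R₁ ≤ R₂, θ∞ > 0, u∞ < 0, T > 0 and γ > 0. Let E : [0,T] × [0,∞) → ℝ be continuous and satisfy sup_{(t,x)} |E(t,x)| · (2R₂ + |u∞|)/θ∞ ≤ β R₁ / 2 − γ. Suppose f : [0,T] × [0,∞) × ℝ³ → ℝ is C¹, satisfies ∂_t f + ξ₁ ∂_x f + E ∂_{ξ₁} f = ((ξ₁ − u∞)/(2θ∞)) E f on (0,T) × (0,∞) × ℝ³, satisfies f(t,x,ξ) = 0 whenever ξ₁ ∉ [R₁/2, 2R₂], and satisfies sup_{t ∈ [0,T]} ∫₀^∞ ∫_{ℝ³} e^{βx} (1 + |ξ₁|)( |f(t,x,ξ)|² + |∇_{t,x,ξ} f(t,x,ξ)|² ) dξ dx < ∞. Then for every t ∈ [0,T], ∫₀^∞ ∫_{ℝ³} e^{βx} |f(t,x,ξ)|² dξ dx ≥ e^{γ t} ∫₀^∞ ∫_{ℝ³} e^{βx} |f(0,x,ξ)|² dξ dx. -/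
/-!
Let `I(t) = ∫∫ e^{βx} f² dξ dx` over `x > 0`. Multiplying the equation by `2 e^{βx} f` and
integrating, the force term `E ∂_{ξ₁}(f²)` integrates to zero in `ξ₁` because `f` has compact
support in `ξ₁`; the transport term is integrated by parts in `x`,
`-∫∫ ξ₁ e^{βx} ∂ₓ(f²) = ∫ ξ₁ f(0)² + β ∫∫ ξ₁ e^{βx} f² ≥ (β R₁ / 2) I`,
since `ξ₁ ≥ R₁ / 2 > 0` on the support; and the source term is at least `-(β R₁ / 2 - γ) I` by
the smallness of `E`. Hence `I' ≥ γ I`, in the integrated form obtained by Fubini in `(t, x, ξ)`,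
and a Gronwall argument gives `I(t) ≥ e^{γ t} I(0)`. The weighted `H¹` bound on `f` supplies all
the integrability this needs.
-/

open MeasureTheory Real Set Filter Topology

theorem hasDerivAt_sq {φ : ℝ → ℝ} {φ' x : ℝ} (h : HasDerivAt φ φ' x) :
    HasDerivAt (fun x => φ x ^ 2) (2 * φ x * φ') x := by
  simpa using h.fun_pow 2

theorem integral_eq_zero_of_hasDerivAt_of_eq_zero_outside {φ φ' : ℝ → ℝ} {A B : ℝ}
    (hφ : ∀ v, HasDerivAt φ (φ' v) v) (hφ' : Integrable φ')
    (h : ∀ v, v < A ∨ B < v → φ v = 0) : ∫ v, φ' v = 0 := by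
  have hbot : Tendsto φ atBot (𝓝 0) :=
    tendsto_const_nhds.congr' <| (eventually_lt_atBot A).mono fun v hv => (h v (.inl hv)).symm
  have htop : Tendsto φ atTop (𝓝 0) :=
    tendsto_const_nhds.congr' <| (eventually_gt_atTop B).mono fun v hv => (h v (.inr hv)).symm
  simpa using integral_of_hasDerivAt_of_tendsto hφ hφ' hbot htop

theorem integral_Ioi_exp_mul_two_mul_deriv {φ φ' : ℝ → ℝ} {β : ℝ}
    (hφ : ∀ x, HasDerivAt φ (φ' x) x)
    (h0 : IntegrableOn (fun x => exp (β * x) * φ x ^ 2) (Ioi 0))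
    (h1 : IntegrableOn (fun x => exp (β * x) * (2 * φ x * φ' x)) (Ioi 0)) :
    ∫ x in Ioi 0, exp (β * x) * (2 * φ x * φ' x)
      = -φ 0 ^ 2 - β * ∫ x in Ioi 0, exp (β * x) * φ x ^ 2 := by
  have hderiv : ∀ x, HasDerivAt (fun x => exp (β * x) * φ x ^ 2)
      (β * (exp (β * x) * φ x ^ 2) + exp (β * x) * (2 * φ x * φ' x)) x := fun x => by
    have he : HasDerivAt (fun x => exp (β * x)) (exp (β * x) * β) x := by
      simpa using ((hasDerivAt_id x).const_mul β).exp
    exact (he.fun_mul (hasDerivAt_sq (hφ x))).congr_deriv (by ring)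
  have hint := (h0.const_mul β).add h1
  have h := integral_Ioi_of_hasDerivAt_of_tendsto' (fun x _ => hderiv x) hint
    (tendsto_zero_of_hasDerivAt_of_integrableOn_Ioi (fun x _ => hderiv x) hint h0)
  rw [integral_add (h0.const_mul β) h1, integral_const_mul] at h
  simp only [mul_zero, exp_zero, one_mul] at h
  linarith

theorem mul_integral_Ioi_exp_mul_two_mul_deriv_le {φ φ' : ℝ → ℝ} {β R c : ℝ} (hβ : 0 ≤ β)
    (hR : 0 ≤ R) (hc : (∃ x, φ x ≠ 0) → R ≤ c) (hφ : ∀ x, HasDerivAt φ (φ' x) x)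
    (h0 : IntegrableOn (fun x => exp (β * x) * φ x ^ 2) (Ioi 0))
    (h1 : IntegrableOn (fun x => exp (β * x) * (2 * φ x * φ' x)) (Ioi 0)) :
    c * ∫ x in Ioi 0, exp (β * x) * (2 * φ x * φ' x)
      ≤ -(β * R * ∫ x in Ioi 0, exp (β * x) * φ x ^ 2) := by
  by_cases hφ0 : ∃ x, φ x ≠ 0
  · have hRc := hc hφ0
    have hJ : 0 ≤ ∫ x in Ioi 0, exp (β * x) * φ x ^ 2 :=
      setIntegral_nonneg measurableSet_Ioi fun x _ => by positivity
    rw [integral_Ioi_exp_mul_two_mul_deriv hφ h0 h1]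
    nlinarith [mul_le_mul_of_nonneg_left hRc (mul_nonneg hβ hJ), sq_nonneg (φ 0)]
  · push Not at hφ0
    simp [hφ0]

theorem integral_prod_eq_zero_of_hasDerivAt_of_eq_zero_outside {X Y : Type*}
    [MeasurableSpace X] [MeasureSpace Y] {ν : Measure X} [SFinite ν]
    [SFinite (volume : Measure Y)] {φ φ' : X × ℝ × Y → ℝ} {A B : ℝ}
    (hφ : ∀ x v y, HasDerivAt (fun w => φ (x, w, y)) (φ' (x, v, y)) v)
    (h : ∀ x v y, v < A ∨ B < v → φ (x, v, y) = 0) (hφ' : Integrable φ' (ν.prod volume)) :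
    ∫ p, φ' p ∂ν.prod volume = 0 := by
  rw [integral_prod _ hφ']
  refine integral_eq_zero_of_ae ?_
  filter_upwards [hφ'.prod_right_ae] with x hx
  rw [Measure.volume_eq_prod] at hx ⊢
  rw [integral_prod_symm _ hx]
  refine integral_eq_zero_of_ae ?_
  filter_upwards [hx.prod_left_ae] with y hy
  exact integral_eq_zero_of_hasDerivAt_of_eq_zero_outside (fun v => hφ x v y) hy
    fun v hv => h x v y hv

theorem integral_prod_mul_exp_mul_two_mul_deriv_le {Y : Type*} [MeasurableSpace Y]
    {ν : Measure Y} [SFinite ν] {g gx : ℝ → Y → ℝ} {c : Y → ℝ} {β R : ℝ}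
    (hβ : 0 ≤ β) (hR : 0 ≤ R) (hc : ∀ x ξ, g x ξ ≠ 0 → R ≤ c ξ)
    (hg : ∀ x ξ, HasDerivAt (fun y => g y ξ) (gx x ξ) x)
    (h0 : Integrable (fun p : ℝ × Y => exp (β * p.1) * g p.1 p.2 ^ 2)
      ((volume.restrict (Ioi 0)).prod ν))
    (h1 : Integrable (fun p : ℝ × Y => exp (β * p.1) * (2 * g p.1 p.2 * gx p.1 p.2))
      ((volume.restrict (Ioi 0)).prod ν))
    (h1c : Integrable (fun p : ℝ × Y => c p.2 * (exp (β * p.1) * (2 * g p.1 p.2 * gx p.1 p.2)))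
      ((volume.restrict (Ioi 0)).prod ν)) :
    ∫ p, c p.2 * (exp (β * p.1) * (2 * g p.1 p.2 * gx p.1 p.2)) ∂(volume.restrict (Ioi 0)).prod ν
      ≤ -(β * R * ∫ p, exp (β * p.1) * g p.1 p.2 ^ 2 ∂(volume.restrict (Ioi 0)).prod ν) := by
  rw [integral_prod_symm _ h1c, integral_prod_symm _ h0, ← integral_const_mul, ← integral_neg]
  refine integral_mono_ae h1c.integral_prod_right (h0.integral_prod_right.const_mul _).neg ?_
  filter_upwards [h0.prod_left_ae, h1.prod_left_ae] with ξ h0ξ h1ξ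
  rw [integral_const_mul]
  exact mul_integral_Ioi_exp_mul_two_mul_deriv_le hβ hR (fun ⟨x, hx⟩ => hc x ξ hx)
    (fun x => hg x ξ) h0ξ h1ξ

theorem integrable_prod_restrict_Ioc_of_lintegral_le {α : Type*} [MeasurableSpace α]
    {μ : Measure α} [SFinite μ] {G : ℝ → α → ℝ} {a b B : ℝ}
    (hG : Measurable fun q : α × ℝ => G q.2 q.1) (h0 : ∀ t p, 0 ≤ G t p)
    (hB : ∀ t ∈ Ioc a b, ∫⁻ p, ENNReal.ofReal (G t p) ∂μ ≤ ENNReal.ofReal B) :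
    Integrable (fun q : α × ℝ => G q.2 q.1) (μ.prod (volume.restrict (Ioc a b))) := by
  refine ⟨hG.aestronglyMeasurable, (hasFiniteIntegral_iff_ofReal
    (ae_of_all _ fun q : α × ℝ => h0 q.2 q.1)).2 ?_⟩
  rw [lintegral_prod_symm _ hG.ennreal_ofReal.aemeasurable]
  calc ∫⁻ t in Ioc a b, ∫⁻ p, ENNReal.ofReal (G t p) ∂μ
      ≤ ∫⁻ _ in Ioc a b, ENNReal.ofReal B := setLIntegral_mono' measurableSet_Ioc hB
    _ < ⊤ := by
      rw [setLIntegral_const]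
      exact ENNReal.mul_lt_top ENNReal.ofReal_lt_top measure_Ioc_lt_top

theorem integral_sub_integral_eq_setIntegral_Ioc {α : Type*} [MeasurableSpace α]
    {μ : Measure α} [SFinite μ] {w w' : ℝ → α → ℝ} {a b : ℝ} (hab : a ≤ b)
    (hw : ∀ τ p, HasDerivAt (fun s => w s p) (w' τ p) τ)
    (ha : Integrable (w a) μ) (hb : Integrable (w b) μ)
    (hw' : Integrable (fun q : α × ℝ => w' q.2 q.1) (μ.prod (volume.restrict (Ioc a b)))) :
    ∫ p, w b p ∂μ - ∫ p, w a p ∂μ = ∫ τ in Ioc a b, ∫ p, w' τ p ∂μ := by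
  rw [← integral_sub hb ha, ← integral_integral_swap hw']
  refine integral_congr_ae ?_
  filter_upwards [hw'.prod_right_ae] with p hp
  rw [← intervalIntegral.integral_of_le hab,
    intervalIntegral.integral_eq_sub_of_hasDerivAt (fun τ _ => hw τ p)
      ((intervalIntegrable_iff_integrableOn_Ioc_of_le hab).2 hp)]

theorem exp_mul_le_of_add_mul_intervalIntegral_le {I : ℝ → ℝ} {γ T : ℝ} (hγ : 0 ≤ γ)
    (hI : ContinuousOn I (Icc 0 T))
    (h : ∀ t ∈ Icc 0 T, I 0 + γ * ∫ τ in 0..t, I τ ≤ I t) :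
    ∀ t ∈ Icc 0 T, exp (γ * t) * I 0 ≤ I t := by
  intro t ht
  have hT : 0 ≤ T := ht.1.trans ht.2
  -- a continuous extension of `I` to `ℝ`, so that its primitive is differentiable everywhere
  set J : ℝ → ℝ := fun s => I (projIcc 0 T hT s)
  have hJ : Continuous J := hI.comp_continuous (continuous_subtype_val.comp continuous_projIcc)
    fun s => (projIcc 0 T hT s).2
  have hJI : ∀ s ∈ Icc 0 T, J s = I s := fun s hs => by simp [J, projIcc_of_mem hT hs]
  have hPI : ∀ s ∈ Icc 0 T, ∫ τ in 0..s, J τ = ∫ τ in 0..s, I τ := fun s hs =>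
    intervalIntegral.integral_congr fun τ hτ => by
      rw [uIcc_of_le hs.1] at hτ
      exact hJI τ ⟨hτ.1, hτ.2.trans hs.2⟩
  -- `Ψ s = e^{-γ s} (I 0 + γ ∫₀ˢ I)` is nondecreasing since `(I 0 + γ ∫₀ˢ I)' = γ I s`
  set Ψ : ℝ → ℝ := fun s => exp (-(γ * s)) * (I 0 + γ * ∫ τ in 0..s, J τ)
  have hΨ : ∀ s, HasDerivAt Ψ
      (exp (-(γ * s)) * (-γ) * (I 0 + γ * ∫ τ in 0..s, J τ) + exp (-(γ * s)) * (γ * J s)) s :=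
    fun s => by
      have he : HasDerivAt (fun s => exp (-(γ * s))) (exp (-(γ * s)) * (-γ)) s := by
        simpa using ((hasDerivAt_id s).const_mul γ).neg.exp
      exact he.mul (((hJ.integral_hasStrictDerivAt 0 s).hasDerivAt.const_mul γ).const_add _)
  have hmono : MonotoneOn Ψ (Icc 0 T) := by
    refine monotoneOn_of_deriv_nonneg (convex_Icc 0 T)
      (fun s _ => (hΨ s).continuousAt.continuousWithinAt)
      (fun s _ => (hΨ s).differentiableAt.differentiableWithinAt) fun s hs => ?_
    rw [interior_Icc] at hs
    have hs' : s ∈ Icc 0 T := Ioo_subset_Icc_self hs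
    rw [(hΨ s).deriv, hJI s hs', hPI s hs']
    have := mul_nonneg (mul_nonneg (exp_pos (-(γ * s))).le hγ) (sub_nonneg.2 (h s hs'))
    linarith
  have hΨ0 : Ψ 0 = I 0 := by simp [Ψ]
  have hΨt : Ψ t ≤ exp (-(γ * t)) * I t := by
    simp only [Ψ]
    rw [hPI t ht]
    exact mul_le_mul_of_nonneg_left (h t ht) (exp_pos _).le
  calc exp (γ * t) * I 0 ≤ exp (γ * t) * (exp (-(γ * t)) * I t) := by
        rw [← hΨ0]
        exact mul_le_mul_of_nonneg_left ((hmono ⟨le_rfl, hT⟩ ht ht.1).trans hΨt) (exp_pos _).le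
    _ = I t := by rw [← mul_assoc, ← exp_add, add_neg_cancel, exp_zero, one_mul]

theorem exp_mul_integral_le_integral_of_hasDerivAt {α : Type*} [MeasurableSpace α]
    {μ : Measure α} [SFinite μ] {w w' : ℝ → α → ℝ} {γ T : ℝ} (hγ : 0 ≤ γ)
    (hw : ∀ τ p, HasDerivAt (fun s => w s p) (w' τ p) τ)
    (hwi : ∀ t ∈ Icc 0 T, Integrable (w t) μ)
    (hw' : Integrable (fun q : α × ℝ => w' q.2 q.1) (μ.prod (volume.restrict (Ioc 0 T))))
    (hgrowth : ∀ τ ∈ Ioo 0 T, γ * ∫ p, w τ p ∂μ ≤ ∫ p, w' τ p ∂μ) :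
    ∀ t ∈ Icc 0 T, exp (γ * t) * ∫ p, w 0 p ∂μ ≤ ∫ p, w t p ∂μ := by
  intro t ht
  have h0 : (0 : ℝ) ∈ Icc 0 T := ⟨le_rfl, ht.1.trans ht.2⟩
  set I : ℝ → ℝ := fun s => ∫ p, w s p ∂μ
  set D : ℝ → ℝ := fun τ => ∫ p, w' τ p ∂μ
  have hI : ∀ s ∈ Icc 0 T, I s = I 0 + ∫ τ in Ioc 0 s, D τ := fun s hs => by
    have hw's := hw'.mono_measure
      (Measure.prod_mono le_rfl (Measure.restrict_mono (Ioc_subset_Ioc_right hs.2) le_rfl))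
    rw [← integral_sub_integral_eq_setIntegral_Ioc hs.1 hw (hwi 0 h0) (hwi s hs) hw's]
    ring
  have hD : IntegrableOn D (Ioc 0 T) := hw'.integral_prod_right
  have hIc : ContinuousOn I (Icc 0 T) :=
    (continuousOn_const.add (intervalIntegral.continuousOn_primitive
      ((integrableOn_Icc_iff_integrableOn_Ioc).2 hD))).congr hI
  refine exp_mul_le_of_add_mul_intervalIntegral_le hγ hIc (fun s hs => ?_) t ht
  rw [hI s hs, intervalIntegral.integral_of_le hs.1, ← integral_const_mul,
    integral_Ioc_eq_integral_Ioo, integral_Ioc_eq_integral_Ioo, add_le_add_iff_left]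
  have hsub : Ioo 0 s ⊆ Icc 0 T := Ioo_subset_Icc_self.trans (Icc_subset_Icc_right hs.2)
  exact setIntegral_mono_on ((hIc.integrableOn_Icc.mono_set hsub).const_mul γ)
    (hD.mono_set (Ioo_subset_Ioc_self.trans (Ioc_subset_Ioc_right hs.2))) measurableSet_Ioo
    fun τ hτ => hgrowth τ ⟨hτ.1, hτ.2.trans_le hs.2⟩

theorem abs_two_mul_le_sq_add_sq {a b d : ℝ} (hb : |b| ≤ d) : |2 * a * b| ≤ a ^ 2 + d ^ 2 := by
  rw [abs_mul, abs_mul, abs_two]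
  nlinarith [sq_nonneg (|a| - d), abs_nonneg a, abs_nonneg b, sq_abs a]

theorem abs_div_mul_le_of_mem_Icc {ξ₁ u θ a R₁ R₂ : ℝ} (hR₁ : 0 ≤ R₁) (hθ : 0 < θ)
    (hξ : ξ₁ ∈ Icc (R₁ / 2) (2 * R₂)) : |(ξ₁ - u) / θ * a| ≤ |a| * (2 * R₂ + |u|) / θ := by
  have hξu : |ξ₁ - u| ≤ 2 * R₂ + |u| := by
    have := abs_sub ξ₁ u
    rw [abs_of_nonneg (by linarith [hξ.1] : (0 : ℝ) ≤ ξ₁)] at this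
    linarith [hξ.2]
  rw [abs_mul, abs_div, abs_of_pos hθ, div_mul_eq_mul_div, mul_comm |a|]
  gcongr

local notation "μ₊" => Measure.prod (volume.restrict (Ioi (0 : ℝ))) (volume : Measure (ℝ × ℝ × ℝ))

noncomputable section

def uncurried (f : ℝ → ℝ → ℝ × ℝ × ℝ → ℝ) : ℝ × ℝ × (ℝ × ℝ × ℝ) → ℝ :=
  fun q => f q.1 q.2.1 q.2.2

def partialDeriv (f : ℝ → ℝ → ℝ × ℝ × ℝ → ℝ) (v : ℝ × ℝ × (ℝ × ℝ × ℝ)) (t x : ℝ)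
    (ξ : ℝ × ℝ × ℝ) : ℝ :=
  fderiv ℝ (uncurried f) (t, x, ξ) v

def weightedSq (β : ℝ) (f : ℝ → ℝ → ℝ × ℝ × ℝ → ℝ) (t : ℝ) (p : ℝ × (ℝ × ℝ × ℝ)) : ℝ :=
  exp (β * p.1) * f t p.1 p.2 ^ 2

def energyDensity (β : ℝ) (f : ℝ → ℝ → ℝ × ℝ × ℝ → ℝ) (t : ℝ) (p : ℝ × (ℝ × ℝ × ℝ)) : ℝ :=
  exp (β * p.1) * (1 + |p.2.1|) * (f t p.1 p.2 ^ 2 + ‖fderiv ℝ (uncurried f) (t, p.1, p.2)‖ ^ 2)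

variable {f : ℝ → ℝ → ℝ × ℝ × ℝ → ℝ}

theorem hasDerivAt_partialDeriv_time (hf : Differentiable ℝ (uncurried f)) (t x : ℝ)
    (ξ : ℝ × ℝ × ℝ) : HasDerivAt (fun s => f s x ξ) (partialDeriv f (1, 0, 0, 0, 0) t x ξ) t :=
  (hf _).hasFDerivAt.comp_hasDerivAt t ((hasDerivAt_id t).prodMk (hasDerivAt_const t (x, ξ)))

theorem hasDerivAt_partialDeriv_space (hf : Differentiable ℝ (uncurried f)) (t x : ℝ)
    (ξ : ℝ × ℝ × ℝ) : HasDerivAt (fun y => f t y ξ) (partialDeriv f (0, 1, 0, 0, 0) t x ξ) x :=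
  (hf _).hasFDerivAt.comp_hasDerivAt x
    ((hasDerivAt_const x t).prodMk ((hasDerivAt_id x).prodMk (hasDerivAt_const x ξ)))

theorem hasDerivAt_partialDeriv_velocity (hf : Differentiable ℝ (uncurried f)) (t x : ℝ)
    (ξ : ℝ × ℝ × ℝ) :
    HasDerivAt (fun v => f t x (v, ξ.2)) (partialDeriv f (0, 0, 1, 0, 0) t x ξ) ξ.1 :=
  (hf _).hasFDerivAt.comp_hasDerivAt ξ.1 ((hasDerivAt_const ξ.1 t).prodMk
    ((hasDerivAt_const ξ.1 x).prodMk ((hasDerivAt_id ξ.1).prodMk (hasDerivAt_const ξ.1 ξ.2))))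

theorem continuous_partialDeriv (hf : ContDiff ℝ 1 (uncurried f)) (v : ℝ × ℝ × (ℝ × ℝ × ℝ)) :
    Continuous fun q : ℝ × ℝ × (ℝ × ℝ × ℝ) => partialDeriv f v q.1 q.2.1 q.2.2 :=
  (hf.continuous_fderiv one_ne_zero).clm_apply continuous_const

theorem abs_partialDeriv_le {v : ℝ × ℝ × (ℝ × ℝ × ℝ)} (hv : ‖v‖ ≤ 1) (t x : ℝ)
    (ξ : ℝ × ℝ × ℝ) : |partialDeriv f v t x ξ| ≤ ‖fderiv ℝ (uncurried f) (t, x, ξ)‖ := by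
  simpa [partialDeriv] using (fderiv ℝ (uncurried f) (t, x, ξ)).le_opNorm_of_le hv

theorem continuous_slice (hf : ContDiff ℝ 1 (uncurried f)) (t : ℝ) :
    Continuous fun p : ℝ × (ℝ × ℝ × ℝ) => f t p.1 p.2 :=
  hf.continuous.comp (continuous_const.prodMk continuous_id)

theorem continuous_weightedSq (hf : ContDiff ℝ 1 (uncurried f)) (β t : ℝ) :
    Continuous (weightedSq β f t) := by
  have := continuous_slice hf t
  unfold weightedSq
  fun_prop

theorem continuous_energyDensity (hf : ContDiff ℝ 1 (uncurried f)) (β : ℝ) :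
    Continuous fun q : (ℝ × (ℝ × ℝ × ℝ)) × ℝ => energyDensity β f q.2 q.1 := by
  have hemb : Continuous fun q : (ℝ × (ℝ × ℝ × ℝ)) × ℝ => (q.2, q.1.1, q.1.2) := by fun_prop
  have hfq : Continuous fun q : (ℝ × (ℝ × ℝ × ℝ)) × ℝ => f q.2 q.1.1 q.1.2 :=
    hf.continuous.comp hemb
  have hDq := (hf.continuous_fderiv one_ne_zero).comp hemb
  exact ((continuous_const.mul (continuous_fst.comp continuous_fst)).rexp.mul
    (continuous_const.add (continuous_fst.comp (continuous_snd.comp continuous_fst)).abs)).mul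
    ((hfq.pow 2).add (hDq.norm.pow 2))

theorem weightedSq_nonneg (β t : ℝ) (p : ℝ × (ℝ × ℝ × ℝ)) : 0 ≤ weightedSq β f t p := by
  unfold weightedSq
  positivity

theorem weightedSq_le_energyDensity (β t : ℝ) (p : ℝ × (ℝ × ℝ × ℝ)) :
    weightedSq β f t p ≤ energyDensity β f t p := by
  unfold weightedSq energyDensity
  rw [mul_assoc]
  gcongr
  nlinarith [abs_nonneg p.2.1, sq_nonneg (f t p.1 p.2),
    sq_nonneg ‖fderiv ℝ (uncurried f) (t, p.1, p.2)‖]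

theorem abs_mul_two_mul_partialDeriv_le {v : ℝ × ℝ × (ℝ × ℝ × ℝ)} (hv : ‖v‖ ≤ 1) {c : ℝ}
    (β t x : ℝ) (ξ : ℝ × ℝ × ℝ) (hc : |c| ≤ 1 + |ξ.1|) :
    |c * (exp (β * x) * (2 * f t x ξ * partialDeriv f v t x ξ))| ≤ energyDensity β f t (x, ξ) := by
  have hD := abs_two_mul_le_sq_add_sq (a := f t x ξ) (abs_partialDeriv_le (f := f) hv t x ξ)
  calc |c * (exp (β * x) * (2 * f t x ξ * partialDeriv f v t x ξ))|
      = exp (β * x) * (|c| * |2 * f t x ξ * partialDeriv f v t x ξ|) := by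
        rw [abs_mul, abs_mul, abs_of_pos (exp_pos _)]
        ring
    _ ≤ exp (β * x) * ((1 + |ξ.1|) * (f t x ξ ^ 2 + ‖fderiv ℝ (uncurried f) (t, x, ξ)‖ ^ 2)) := by
        gcongr
    _ = energyDensity β f t (x, ξ) := by
        unfold energyDensity
        ring

theorem lintegral_energyDensity_eq (hf : ContDiff ℝ 1 (uncurried f)) (β t : ℝ) :
    ∫⁻ p, ENNReal.ofReal (energyDensity β f t p) ∂μ₊
      = ∫⁻ x in Ioi 0, ∫⁻ ξ, ENNReal.ofReal (energyDensity β f t (x, ξ)) :=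
  lintegral_prod _ ((continuous_energyDensity hf β).comp
    (continuous_id.prodMk continuous_const)).measurable.ennreal_ofReal.aemeasurable

theorem integrable_energyDensity (hf : ContDiff ℝ 1 (uncurried f)) {β t B : ℝ}
    (hB : ∫⁻ x in Ioi 0, ∫⁻ ξ, ENNReal.ofReal (energyDensity β f t (x, ξ)) ≤ ENNReal.ofReal B) :
    Integrable (energyDensity β f t) μ₊ :=
  ⟨((continuous_energyDensity hf β).comp
      (continuous_id.prodMk continuous_const)).aestronglyMeasurable,
    (hasFiniteIntegral_iff_ofReal (ae_of_all _ fun p => by unfold energyDensity; positivity)).2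
      ((lintegral_energyDensity_eq hf β t).trans_le hB |>.trans_lt ENNReal.ofReal_lt_top)⟩

theorem integrable_energyDensity_prod (hf : ContDiff ℝ 1 (uncurried f)) {β T B : ℝ}
    (hB : ∀ t ∈ Icc 0 T,
      ∫⁻ x in Ioi 0, ∫⁻ ξ, ENNReal.ofReal (energyDensity β f t (x, ξ)) ≤ ENNReal.ofReal B) :
    Integrable (fun q : (ℝ × (ℝ × ℝ × ℝ)) × ℝ => energyDensity β f q.2 q.1)
      (μ₊.prod (volume.restrict (Ioc 0 T))) :=
  integrable_prod_restrict_Ioc_of_lintegral_le (continuous_energyDensity hf β).measurable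
    (fun t p => by unfold energyDensity; positivity) fun t ht =>
      (lintegral_energyDensity_eq hf β t).trans_le (hB t (Ioc_subset_Icc_self ht))

theorem integrable_weightedSq {β t : ℝ} (hf : ContDiff ℝ 1 (uncurried f))
    (hG : Integrable (energyDensity β f t) μ₊) : Integrable (weightedSq β f t) μ₊ := by
  refine hG.mono' (continuous_weightedSq hf β t).aestronglyMeasurable (ae_of_all _ fun p => ?_)
  rw [norm_of_nonneg (weightedSq_nonneg β t p)]
  exact weightedSq_le_energyDensity β t p

theorem integrable_mul_two_mul_partialDeriv {β t : ℝ} {v : ℝ × ℝ × (ℝ × ℝ × ℝ)}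
    {c : ℝ × (ℝ × ℝ × ℝ) → ℝ} (hf : ContDiff ℝ 1 (uncurried f)) (hv : ‖v‖ ≤ 1)
    (hc : Continuous c) (hcle : ∀ p, |c p| ≤ 1 + |p.2.1|)
    (hG : Integrable (energyDensity β f t) μ₊) :
    Integrable (fun p => c p * (exp (β * p.1) * (2 * f t p.1 p.2 * partialDeriv f v t p.1 p.2)))
      μ₊ := by
  have hft := continuous_slice hf t
  have hD : Continuous fun p : ℝ × (ℝ × ℝ × ℝ) => partialDeriv f v t p.1 p.2 :=
    (continuous_partialDeriv hf v).comp (continuous_const.prodMk continuous_id)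
  exact hG.mono' (by fun_prop)
    (ae_of_all _ fun p => abs_mul_two_mul_partialDeriv_le hv β t p.1 p.2 (hcle p))

theorem integrable_two_mul_partialDeriv {β t : ℝ} {v : ℝ × ℝ × (ℝ × ℝ × ℝ)}
    (hf : ContDiff ℝ 1 (uncurried f)) (hv : ‖v‖ ≤ 1) (hG : Integrable (energyDensity β f t) μ₊) :
    Integrable (fun p => exp (β * p.1) * (2 * f t p.1 p.2 * partialDeriv f v t p.1 p.2)) μ₊ := by
  simpa using integrable_mul_two_mul_partialDeriv (c := 1) hf hv continuous_const
    (fun p => by simp) hG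

theorem integrable_timeDeriv_prod (hf : ContDiff ℝ 1 (uncurried f)) {β T : ℝ}
    (hG : Integrable (fun q : (ℝ × (ℝ × ℝ × ℝ)) × ℝ => energyDensity β f q.2 q.1)
      (μ₊.prod (volume.restrict (Ioc 0 T)))) :
    Integrable (fun q : (ℝ × (ℝ × ℝ × ℝ)) × ℝ => exp (β * q.1.1) *
        (2 * f q.2 q.1.1 q.1.2 * partialDeriv f (1, 0, 0, 0, 0) q.2 q.1.1 q.1.2))
      (μ₊.prod (volume.restrict (Ioc 0 T))) := by
  have hemb : Continuous fun q : (ℝ × (ℝ × ℝ × ℝ)) × ℝ => (q.2, q.1.1, q.1.2) := by fun_prop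
  have hfq : Continuous fun q : (ℝ × (ℝ × ℝ × ℝ)) × ℝ => f q.2 q.1.1 q.1.2 :=
    hf.continuous.comp hemb
  have hDq : Continuous fun q : (ℝ × (ℝ × ℝ × ℝ)) × ℝ =>
      partialDeriv f (1, 0, 0, 0, 0) q.2 q.1.1 q.1.2 :=
    (continuous_partialDeriv hf _).comp hemb
  refine hG.mono' (((continuous_const.mul (continuous_fst.comp continuous_fst)).rexp.mul
    ((continuous_const.mul hfq).mul hDq)).aestronglyMeasurable) (ae_of_all _ fun q => ?_)
  simpa using abs_mul_two_mul_partialDeriv_le (c := 1) (by simp [Prod.norm_def]) β q.2 q.1.1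
    q.1.2 (by simp)

section FixedTime

variable {β R₁ R₂ θ u τ : ℝ} {a : ℝ → ℝ}

theorem fst_mem_Icc_of_ne_zero
    (hsupp : ∀ x, ∀ ξ : ℝ × ℝ × ℝ, ξ.1 < R₁ / 2 ∨ 2 * R₂ < ξ.1 → f τ x ξ = 0)
    {x : ℝ} {ξ : ℝ × ℝ × ℝ} (h : f τ x ξ ≠ 0) : ξ.1 ∈ Icc (R₁ / 2) (2 * R₂) := by
  by_contra hξ
  rw [mem_Icc, not_and_or, not_le, not_le] at hξ
  exact h (hsupp x ξ hξ)

theorem integral_transport_term_le (hβ : 0 ≤ β) (hR₁ : 0 < R₁)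
    (hf : ContDiff ℝ 1 (uncurried f))
    (hsupp : ∀ x, ∀ ξ : ℝ × ℝ × ℝ, ξ.1 < R₁ / 2 ∨ 2 * R₂ < ξ.1 → f τ x ξ = 0)
    (hG : Integrable (energyDensity β f τ) μ₊) :
    ∫ p, p.2.1 * (exp (β * p.1) * (2 * f τ p.1 p.2 * partialDeriv f (0, 1, 0, 0, 0) τ p.1 p.2))
        ∂μ₊
      ≤ -(β * (R₁ / 2) * ∫ p, weightedSq β f τ p ∂μ₊) := by
  have hv : ‖((0, 1, 0, 0, 0) : ℝ × ℝ × (ℝ × ℝ × ℝ))‖ ≤ 1 := by simp [Prod.norm_def]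
  exact integral_prod_mul_exp_mul_two_mul_deriv_le hβ (by positivity)
    (fun x ξ h => (fst_mem_Icc_of_ne_zero hsupp h).1)
    (hasDerivAt_partialDeriv_space (hf.differentiable one_ne_zero) τ)
    (integrable_weightedSq hf hG) (integrable_two_mul_partialDeriv hf hv hG)
    (integrable_mul_two_mul_partialDeriv hf hv (by fun_prop) (fun p => by simp) hG)

theorem integral_force_term_eq_zero (hf : Differentiable ℝ (uncurried f))
    (hsupp : ∀ x, ∀ ξ : ℝ × ℝ × ℝ, ξ.1 < R₁ / 2 ∨ 2 * R₂ < ξ.1 → f τ x ξ = 0)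
    (hi : Integrable (fun p => a p.1 * (exp (β * p.1) *
      (2 * f τ p.1 p.2 * partialDeriv f (0, 0, 1, 0, 0) τ p.1 p.2))) μ₊) :
    ∫ p, a p.1 * (exp (β * p.1) * (2 * f τ p.1 p.2 * partialDeriv f (0, 0, 1, 0, 0) τ p.1 p.2))
      ∂μ₊ = 0 :=
  integral_prod_eq_zero_of_hasDerivAt_of_eq_zero_outside
    (φ := fun p => a p.1 * (exp (β * p.1) * f τ p.1 p.2 ^ 2)) (A := R₁ / 2) (B := 2 * R₂)
    (fun x v y => ((hasDerivAt_sq (hasDerivAt_partialDeriv_velocity hf τ x (v, y))).const_mul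
      (exp (β * x))).const_mul (a x)) (fun x v y hv => by simp [hsupp x (v, y) hv]) hi

theorem ae_abs_source_term_le {γ : ℝ} (hR₁ : 0 < R₁) (hθ : 0 < θ)
    (hab : ∀ x ≥ (0 : ℝ), |a x| * (2 * R₂ + |u|) / θ ≤ β * R₁ / 2 - γ)
    (hsupp : ∀ x, ∀ ξ : ℝ × ℝ × ℝ, ξ.1 < R₁ / 2 ∨ 2 * R₂ < ξ.1 → f τ x ξ = 0) :
    ∀ᵐ p ∂μ₊, |(p.2.1 - u) / θ * a p.1 * weightedSq β f τ p|
      ≤ (β * R₁ / 2 - γ) * weightedSq β f τ p := by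
  filter_upwards [Measure.quasiMeasurePreserving_fst.ae (ae_restrict_mem measurableSet_Ioi)]
    with p hp
  by_cases hf0 : f τ p.1 p.2 = 0
  · simp [weightedSq, hf0]
  · rw [abs_mul, abs_of_nonneg (weightedSq_nonneg β τ p)]
    exact mul_le_mul_of_nonneg_right
      ((abs_div_mul_le_of_mem_Icc hR₁.le hθ (fst_mem_Icc_of_ne_zero hsupp hf0)).trans
        (hab _ (le_of_lt hp))) (weightedSq_nonneg β τ p)

theorem integral_timeDeriv_eq_source_sub_transport (hf : ContDiff ℝ 1 (uncurried f))
    (hsupp : ∀ x, ∀ ξ : ℝ × ℝ × ℝ, ξ.1 < R₁ / 2 ∨ 2 * R₂ < ξ.1 → f τ x ξ = 0)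
    (hpde : ∀ x > (0 : ℝ), ∀ ξ : ℝ × ℝ × ℝ, partialDeriv f (1, 0, 0, 0, 0) τ x ξ
      + ξ.1 * partialDeriv f (0, 1, 0, 0, 0) τ x ξ + a x * partialDeriv f (0, 0, 1, 0, 0) τ x ξ
      = (ξ.1 - u) / (2 * θ) * a x * f τ x ξ)
    (hG : Integrable (energyDensity β f τ) μ₊)
    (hsource : Integrable (fun p => (p.2.1 - u) / θ * a p.1 * weightedSq β f τ p) μ₊) :
    ∫ p, exp (β * p.1) * (2 * f τ p.1 p.2 * partialDeriv f (1, 0, 0, 0, 0) τ p.1 p.2) ∂μ₊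
      = ∫ p, (p.2.1 - u) / θ * a p.1 * weightedSq β f τ p ∂μ₊
        - ∫ p, p.2.1 * (exp (β * p.1) *
            (2 * f τ p.1 p.2 * partialDeriv f (0, 1, 0, 0, 0) τ p.1 p.2)) ∂μ₊ := by
  have htime := integrable_two_mul_partialDeriv hf (v := (1, 0, 0, 0, 0))
    (by simp [Prod.norm_def]) hG
  have htransport := integrable_mul_two_mul_partialDeriv hf (v := (0, 1, 0, 0, 0))
    (c := fun p => p.2.1)
    (by simp [Prod.norm_def]) (by fun_prop) (fun p => by simp) hG
  -- the equation multiplied by `2 e^{βx} f`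
  have hsplit : (fun p : ℝ × (ℝ × ℝ × ℝ) =>
        exp (β * p.1) * (2 * f τ p.1 p.2 * partialDeriv f (1, 0, 0, 0, 0) τ p.1 p.2))
      =ᵐ[μ₊] fun p => -(p.2.1 * (exp (β * p.1) * (2 * f τ p.1 p.2 *
          partialDeriv f (0, 1, 0, 0, 0) τ p.1 p.2)))
        - a p.1 * (exp (β * p.1) * (2 * f τ p.1 p.2 * partialDeriv f (0, 0, 1, 0, 0) τ p.1 p.2))
        + (p.2.1 - u) / θ * a p.1 * weightedSq β f τ p := by
    filter_upwards [Measure.quasiMeasurePreserving_fst.ae (ae_restrict_mem measurableSet_Ioi)]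
      with p hp
    unfold weightedSq
    linear_combination (2 * exp (β * p.1) * f τ p.1 p.2) * hpde p.1 hp p.2
  -- the force term is integrable because, by the equation, the other three terms are
  have hforce : Integrable (fun p => a p.1 * (exp (β * p.1) *
      (2 * f τ p.1 p.2 * partialDeriv f (0, 0, 1, 0, 0) τ p.1 p.2))) μ₊ :=
    ((htransport.neg.sub htime).add hsource).congr (hsplit.mono fun p hp => by
      simp only [Pi.add_apply, Pi.sub_apply, Pi.neg_apply] at hp ⊢
      linarith)
  rw [integral_congr_ae hsplit, integral_add _ hsource, integral_sub _ hforce, integral_neg,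
    integral_force_term_eq_zero (hf.differentiable one_ne_zero) hsupp hforce]
  · ring
  exacts [htransport.neg, htransport.neg.sub hforce]

theorem mul_integral_weightedSq_le_integral_timeDeriv {γ : ℝ} (hβ : 0 ≤ β) (hR₁ : 0 < R₁)
    (hθ : 0 < θ) (hf : ContDiff ℝ 1 (uncurried f)) (ha : Continuous a)
    (hab : ∀ x ≥ (0 : ℝ), |a x| * (2 * R₂ + |u|) / θ ≤ β * R₁ / 2 - γ)
    (hsupp : ∀ x, ∀ ξ : ℝ × ℝ × ℝ, ξ.1 < R₁ / 2 ∨ 2 * R₂ < ξ.1 → f τ x ξ = 0)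
    (hpde : ∀ x > (0 : ℝ), ∀ ξ : ℝ × ℝ × ℝ, partialDeriv f (1, 0, 0, 0, 0) τ x ξ
      + ξ.1 * partialDeriv f (0, 1, 0, 0, 0) τ x ξ + a x * partialDeriv f (0, 0, 1, 0, 0) τ x ξ
      = (ξ.1 - u) / (2 * θ) * a x * f τ x ξ)
    (hG : Integrable (energyDensity β f τ) μ₊) :
    γ * ∫ p, weightedSq β f τ p ∂μ₊
      ≤ ∫ p, exp (β * p.1) * (2 * f τ p.1 p.2 * partialDeriv f (1, 0, 0, 0, 0) τ p.1 p.2) ∂μ₊ := by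
  have h0 := integrable_weightedSq hf hG
  have hbound := ae_abs_source_term_le hR₁ hθ hab hsupp
  have hsource : Integrable (fun p => (p.2.1 - u) / θ * a p.1 * weightedSq β f τ p) μ₊ :=
    (h0.const_mul _).mono' (by have := continuous_weightedSq hf β τ; fun_prop) hbound
  have hsource_ge : -((β * R₁ / 2 - γ) * ∫ p, weightedSq β f τ p ∂μ₊)
      ≤ ∫ p, (p.2.1 - u) / θ * a p.1 * weightedSq β f τ p ∂μ₊ := by
    rw [← integral_const_mul, ← integral_neg]
    exact integral_mono_ae (h0.const_mul _).neg hsource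
      (hbound.mono fun p hp => neg_le_of_abs_le hp)
  rw [integral_timeDeriv_eq_source_sub_transport hf hsupp hpde hG hsource]
  linarith [integral_transport_term_le hβ hR₁ hf hsupp hG]

end FixedTime

end
theorem instability_growth_estimate_general
    (β R₁ R₂ θ u T γ : ℝ) (hβ : 0 < β)
    (hR1 : 0 < R₁) (hθ : 0 < θ) (hγ : 0 < γ)
    (E : ℝ → ℝ → ℝ) (hEc : Continuous (fun p : ℝ × ℝ => E p.1 p.2))
    (hEb : ∀ t ∈ Set.Icc 0 T, ∀ x ≥ (0:ℝ),
      |E t x| * (2*R₂ + |u|) / θ ≤ β * R₁ / 2 - γ)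
    (f : ℝ → ℝ → ℝ × ℝ × ℝ → ℝ)
    (hf : ContDiff ℝ 1 (fun p : ℝ × ℝ × (ℝ × ℝ × ℝ) => f p.1 p.2.1 p.2.2))
    (heq : ∀ t ∈ Set.Ioo 0 T, ∀ x > (0:ℝ), ∀ ξ : ℝ × ℝ × ℝ,
      deriv (fun s => f s x ξ) t + ξ.1 * deriv (fun y => f t y ξ) x
        + E t x * deriv (fun v => f t x (v, ξ.2)) ξ.1
        = ((ξ.1 - u) / (2*θ)) * E t x * f t x ξ)
    (hsupp : ∀ t x, ∀ ξ : ℝ × ℝ × ℝ, ξ.1 < R₁/2 ∨ 2*R₂ < ξ.1 → f t x ξ = 0)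
    (hsup : ∃ B : ℝ, ∀ t ∈ Set.Icc 0 T,
      (∫⁻ x in Set.Ioi 0, ∫⁻ ξ : ℝ × ℝ × ℝ,
        ENNReal.ofReal (Real.exp (β*x) * (1 + |ξ.1|) * ((f t x ξ)^2 +
          ‖fderiv ℝ (fun p : ℝ × ℝ × (ℝ × ℝ × ℝ) => f p.1 p.2.1 p.2.2) (t, x, ξ)‖^2)))
        ≤ ENNReal.ofReal B) :
    ∀ t ∈ Set.Icc 0 T,
      Real.exp (γ * t) * ∫ x in Set.Ioi (0:ℝ), ∫ ξ : ℝ × ℝ × ℝ,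
          Real.exp (β*x) * (f 0 x ξ)^2
        ≤ ∫ x in Set.Ioi (0:ℝ), ∫ ξ : ℝ × ℝ × ℝ, Real.exp (β*x) * (f t x ξ)^2 := by
  obtain ⟨B, hB⟩ := hsup
  have hfd : Differentiable ℝ (uncurried f) := hf.differentiable one_ne_zero
  have hG : ∀ t ∈ Icc 0 T, Integrable (energyDensity β f t) μ₊ :=
    fun t ht => integrable_energyDensity hf (hB t ht)
  have hpde : ∀ τ ∈ Ioo 0 T, ∀ x > (0 : ℝ), ∀ ξ : ℝ × ℝ × ℝ,
      partialDeriv f (1, 0, 0, 0, 0) τ x ξ + ξ.1 * partialDeriv f (0, 1, 0, 0, 0) τ x ξ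
        + E τ x * partialDeriv f (0, 0, 1, 0, 0) τ x ξ = (ξ.1 - u) / (2 * θ) * E τ x * f τ x ξ :=
    fun τ hτ x hx ξ => by
      rw [← (hasDerivAt_partialDeriv_time hfd τ x ξ).deriv,
        ← (hasDerivAt_partialDeriv_space hfd τ x ξ).deriv,
        ← (hasDerivAt_partialDeriv_velocity hfd τ x ξ).deriv]
      exact heq τ hτ x hx ξ
  intro t ht
  have hgrowth := exp_mul_integral_le_integral_of_hasDerivAt hγ.le
    (fun τ p => (hasDerivAt_sq (hasDerivAt_partialDeriv_time hfd τ p.1 p.2)).const_mul _)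
    (fun s hs => integrable_weightedSq hf (hG s hs))
    (integrable_timeDeriv_prod hf (integrable_energyDensity_prod hf hB))
    (fun τ hτ => mul_integral_weightedSq_le_integral_timeDeriv hβ.le hR1 hθ hf
      (hEc.comp (continuous_const.prodMk continuous_id)) (hEb τ (Ioo_subset_Icc_self hτ))
      (hsupp τ) (hpde τ hτ) (hG τ (Ioo_subset_Icc_self hτ))) t ht
  rwa [integral_prod _ (integrable_weightedSq hf (hG t ht)),
    integral_prod _ (integrable_weightedSq hf (hG 0 ⟨le_rfl, ht.1.trans ht.2⟩))] at hgrowth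

/-- exponential growth of the weighted `L²` norm for perturbations
supported in incoming velocities `ξ₁ ∈ [R₁/2, 2R₂]`: if the field `E` is small in the
sense `sup|E| (2R₂+|u∞|)/θ∞ ≤ βR₁/2 − γ`, then
`∫∫ e^{βx}|f(t)|² ≥ e^{γt} ∫∫ e^{βx}|f(0)|²`. -/
theorem instability_growth_estimate
    (β R₁ R₂ θ u T γ : ℝ) (hβ : 0 < β) (hβ1 : β < 1)
    (hR1 : 0 < R₁) (hR12 : R₁ ≤ R₂) (hθ : 0 < θ) (hu : u < 0) (hT : 0 < T) (hγ : 0 < γ)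
    (E : ℝ → ℝ → ℝ) (hEc : Continuous (fun p : ℝ × ℝ => E p.1 p.2))
    (hEb : ∀ t ∈ Set.Icc 0 T, ∀ x ≥ (0:ℝ),
      |E t x| * (2*R₂ + |u|) / θ ≤ β * R₁ / 2 - γ)
    (f : ℝ → ℝ → ℝ × ℝ × ℝ → ℝ)
    (hf : ContDiff ℝ 1 (fun p : ℝ × ℝ × (ℝ × ℝ × ℝ) => f p.1 p.2.1 p.2.2))
    (heq : ∀ t ∈ Set.Ioo 0 T, ∀ x > (0:ℝ), ∀ ξ : ℝ × ℝ × ℝ,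
      deriv (fun s => f s x ξ) t + ξ.1 * deriv (fun y => f t y ξ) x
        + E t x * deriv (fun v => f t x (v, ξ.2)) ξ.1
        = ((ξ.1 - u) / (2*θ)) * E t x * f t x ξ)
    (hsupp : ∀ t x, ∀ ξ : ℝ × ℝ × ℝ, ξ.1 < R₁/2 ∨ 2*R₂ < ξ.1 → f t x ξ = 0)
    (hsup : ∃ B : ℝ, ∀ t ∈ Set.Icc 0 T,
      (∫⁻ x in Set.Ioi 0, ∫⁻ ξ : ℝ × ℝ × ℝ,
        ENNReal.ofReal (Real.exp (β*x) * (1 + |ξ.1|) * ((f t x ξ)^2 +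
          ‖fderiv ℝ (fun p : ℝ × ℝ × (ℝ × ℝ × ℝ) => f p.1 p.2.1 p.2.2) (t, x, ξ)‖^2)))
        ≤ ENNReal.ofReal B) :
    ∀ t ∈ Set.Icc 0 T,
      Real.exp (γ * t) * ∫ x in Set.Ioi (0:ℝ), ∫ ξ : ℝ × ℝ × ℝ,
          Real.exp (β*x) * (f 0 x ξ)^2
        ≤ ∫ x in Set.Ioi (0:ℝ), ∫ ξ : ℝ × ℝ × ℝ, Real.exp (β*x) * (f t x ξ)^2 :=
  instability_growth_estimate_general β R₁ R₂ θ u T γ hβ hR1 hθ hγ E hEc hEb f hf heq hsupp hsup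
end
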